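/- arXiv:0812.0422 — 2 statements merged into one kernel-verified Lean document; each statement's English description precedes it below -/
import Mathlib

section
/- For all χ, ω ∈ ∧V and every φ ∈ ∧² V, the Mukai pairing satisfies (φ ∧ χ, ω) + (χ, φ ∧ ω) = 0. -/
/-- The Mukai pairing on the exterior algebra of a `2n`-dimensional space: the top-degree
(`2n`) component of `χᵀ ∧ ω`, where `χ ↦ χᵀ` is the reversal anti-automorphism. -/
noncomputable def mukaiPairing (V : Type*) [AddCommGroup V] [Module ℂ V] (n : ℕ)
    (χ ω : ExteriorAlgebra ℂ V) : ExteriorAlgebra ℂ V :=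
  GradedAlgebra.proj (fun i : ℕ => ⋀[ℂ]^i V) (2 * n) (CliffordAlgebra.reverse χ * ω)

/-- Reversal negates elements of degree 2. -/
theorem reverse_two_form {V : Type*} [AddCommGroup V] [Module ℂ V] (φ : ExteriorAlgebra ℂ V)
    (hφ : φ ∈ ⋀[ℂ]^2 V) : CliffordAlgebra.reverse (Q := 0) φ = -φ := by
  rw [show (⋀[ℂ]^2 V) = LinearMap.range (ExteriorAlgebra.ι ℂ (M := V)) *
      LinearMap.range (ExteriorAlgebra.ι ℂ (M := V)) from by rw [ExteriorAlgebra.exteriorPower, pow_two]] at hφ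
  refine Submodule.mul_induction_on
    (C := fun x => CliffordAlgebra.reverse (Q := 0) x = -x) hφ ?_ ?_
  · rintro a ⟨v, rfl⟩ b ⟨w, rfl⟩
    rw [CliffordAlgebra.reverse.map_mul, CliffordAlgebra.reverse_ι, CliffordAlgebra.reverse_ι]
    rw [eq_neg_iff_add_eq_zero, add_comm]; exact ExteriorAlgebra.ι_add_mul_swap v w
  · intro x y hx hy; rw [map_add, hx, hy, neg_add]

/-- `(φ ∧ χ, ω) + (χ, φ ∧ ω) = 0` for all `χ, ω ∈ ∧V` and `φ ∈ ∧² V`. -/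
theorem mukai_two_form_skew {V : Type*} [AddCommGroup V] [Module ℂ V]
    [FiniteDimensional ℂ V] {n : ℕ} (hdim : Module.finrank ℂ V = 2 * n)
    (χ ω φ : ExteriorAlgebra ℂ V) (hφ : φ ∈ ⋀[ℂ]^2 V) :
    mukaiPairing V n (φ * χ) ω + mukaiPairing V n χ (φ * ω) = 0 := by
  unfold mukaiPairing
  rw [CliffordAlgebra.reverse.map_mul, reverse_two_form φ hφ, mul_neg, neg_mul, map_neg,
    mul_assoc, neg_add_cancel]
end

section
/- Let u ∈ N be nonzero and let 𝒱 ∈ ∧^{2n} L satisfy 𝒱·ū = u. Then 𝒱̄·u = ū, and the duality pairing ⟨𝒱, 𝒱̄⟩ equals (−1)^n, where the pairing between ∧^{2n} L and ∧^{2n} L̄ is induced by the pairing ⟨X, θ⟩ = 2⟨X, θ⟩ between L and L̄ (for X ∈ L, θ ∈ L̄), extended to top exterior powers by the determinant formula ⟨X₁ ∧ ⋯ ∧ X_{2n}, θ₁ ∧ ⋯ ∧ θ_{2n}⟩ = det(⟨X_a, θ_b⟩). In particular, the element of ∧^{2n} L̄ dual to 𝒱 is Ω = (−1)^n 𝒱̄.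 -/
/-!
Conjugating `𝒱 · ū = u` gives `𝒱̄ · u = ū` at once. For the pairing, evaluate `𝒱 · 𝒱̄ · u`
in two ways. On the one hand it is `𝒱 · ū = u`. On the other hand every `X ∈ L` kills `u` and
`X θ + θ X = 2⟨X, θ⟩`, so pushing the factors of `𝒱` through those of `𝒱̄` one at a time is a
Laplace expansion, and `𝒱 · 𝒱̄ · u = (−1)^(2n choose 2) det (2⟨X_a, θ_b⟩) u`. As `u ≠ 0` and
`(−1)^(2n choose 2) = (−1)^n`, the determinant is `(−1)^n`.
-/

set_option synthInstance.maxHeartbeats 1000000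
set_option maxHeartbeats 1000000

open scoped TensorProduct

variable (T : Type*) [AddCommGroup T] [Module ℝ T]

/-- The complexified tangent space `T ⊗ ℂ`. -/
abbrev Tc := ℂ ⊗[ℝ] T

/-- The complexified cotangent space `T* ⊗ ℂ`, realized as the `ℂ`-dual of `T ⊗ ℂ`. -/
abbrev Tsc := Module.Dual ℂ (Tc T)

/-- The complexification `(T ⊕ T*) ⊗ ℂ`. -/
abbrev Ec := Tc T × Tsc T

/-- The spinor space `S = ∧ (T* ⊗ ℂ)`. -/
abbrev Sp := ExteriorAlgebra ℂ (Tsc T)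

/-- The `ℂ`-bilinear extension of the canonical symmetric pairing
`⟨x₁ + η₁, x₂ + η₂⟩ = (1/2)(η₂(x₁) + η₁(x₂))` on `T ⊕ T*`. -/
noncomputable def pairEc (z w : Ec T) : ℂ := (1 / 2 : ℂ) * (w.2 z.1 + z.2 w.1)

/-- The Clifford action `(x + η) · ρ = ι_x ρ + η ∧ ρ` of `(T ⊕ T*) ⊗ ℂ` on spinors. -/
noncomputable def clAct (z : Ec T) : Module.End ℂ (Sp T) :=
  CliffordAlgebra.contractLeft (Module.Dual.eval ℂ (Tc T) z.1)
    + LinearMap.mulLeft ℂ (ExteriorAlgebra.ι ℂ z.2)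

/-- The `μ`-eigenspace of an endomorphism `Jc` of `(T ⊕ T*) ⊗ ℂ`. -/
noncomputable def eigSp (Jc : Module.End ℂ (Ec T)) (μ : ℂ) : Submodule ℂ (Ec T) where
  carrier := {z | Jc z = μ • z}
  add_mem' := by
    intro a b ha hb
    simp only [Set.mem_setOf_eq] at *
    rw [map_add, ha, hb, smul_add]
  zero_mem' := by simp [Set.mem_setOf_eq]
  smul_mem' := by
    intro c z hz
    simp only [Set.mem_setOf_eq] at *
    rw [map_smul, hz, smul_comm]

/-- The pure spinor line of a subspace `L ⊆ (T ⊕ T*) ⊗ ℂ`: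
`N = {ρ ∈ S : z · ρ = 0 for all z ∈ L}`. -/
noncomputable def pureSpinorLine (L : Submodule ℂ (Ec T)) : Submodule ℂ (Sp T) :=
  ⨅ z ∈ L, LinearMap.ker (clAct T z)

/-- `N_k = ∧^k L̄ · N`: the span of all `W·ρ` with `W` a Clifford product of `k` elements of
the `(−i)`-eigenspace `L̄` of `Jc` and `ρ ∈ N`, the pure spinor line of the `(+i)`-eigenspace. -/
noncomputable def NGr (Jc : Module.End ℂ (Ec T)) (k : ℕ) : Submodule ℂ (Sp T) :=
  Submodule.span ℂ
    {s | ∃ Wv : Fin k → Ec T, (∀ a, Wv a ∈ eigSp T Jc (-Complex.I)) ∧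
      ∃ ρ ∈ pureSpinorLine T (eigSp T Jc Complex.I),
        s = ((List.ofFn fun a => clAct T (Wv a)).prod) ρ}

/-- The Mukai pairing on spinors: the top-degree (`2n`) component of `χᵀ ∧ ω`, where
`χ ↦ χᵀ` is the reversal anti-automorphism. -/
noncomputable def mukaiSp (n : ℕ) (χ ω : Sp T) : Sp T :=
  GradedAlgebra.proj (fun i : ℕ => ⋀[ℂ]^i (Tsc T)) (2 * n) (CliffordAlgebra.reverse χ * ω)

/-- The conjugation on `(T ⊕ T*) ⊗ ℂ` built from a conjugation `σT` on `T ⊗ ℂ` and the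
induced conjugation `σTs` on `T* ⊗ ℂ`. -/
noncomputable def conjEc (σT : Tc T →+ Tc T) (σTs : Tsc T → Tsc T) (z : Ec T) : Ec T :=
  (σT z.1, σTs z.2)

theorem neg_one_pow_choose_two_two_mul {R : Type*} [Monoid R] [HasDistribNeg R] (n : ℕ) :
    (-1 : R) ^ (2 * n).choose 2 = (-1) ^ n := by
  have h : (2 * n).choose 2 = n + 2 * (n * (n - 1)) := by
    rw [Nat.choose_two_right]
    rcases n with _ | m
    · rfl
    · rw [show 2 * (m + 1) - 1 = 2 * m + 1 by omega, Nat.add_sub_cancel,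
        show 2 * (m + 1) * (2 * m + 1) = 2 * (m + 1 + 2 * ((m + 1) * m)) by ring,
        Nat.mul_div_cancel_left _ two_pos]
  rw [h, pow_add, pow_mul, neg_one_sq, one_pow, mul_one]

section CliffordDeterminant

variable {R S : Type*} [CommRing R] [AddCommGroup S] [Module R S]

theorem apply_prod_ofFn_of_anticomm {u : S} {x : Module.End R S} (hx : x u = 0) :
    ∀ {k : ℕ} (θ : Fin (k + 1) → Module.End R S) (c : Fin (k + 1) → R),
      (∀ j, x * θ j + θ j * x = c j • 1) →
      x ((List.ofFn θ).prod u) =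
        ∑ j : Fin (k + 1), ((-1) ^ (j : ℕ) * c j) • (List.ofFn (Fin.removeNth j θ)).prod u
  | 0, θ, c, hθ => by
    have h := LinearMap.congr_fun (hθ 0) u
    simp only [LinearMap.add_apply, Module.End.mul_apply, hx, map_zero, add_zero] at h
    simp [h]
  | k + 1, θ, c, hθ => by
    set w := (List.ofFn fun i => θ i.succ).prod u
    have hhead : x (θ 0 w) = c 0 • w - θ 0 (x w) := by
      rw [eq_sub_iff_add_eq]
      simpa using LinearMap.congr_fun (hθ 0) w
    have hremove (j : Fin (k + 1)) : (List.ofFn (Fin.removeNth j.succ θ)).prod u =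
        θ 0 ((List.ofFn (Fin.removeNth j fun i => θ i.succ)).prod u) := by
      simp [List.ofFn_succ, Fin.removeNth, Fin.succ_succAbove_succ]; rfl
    conv_rhs => rw [Fin.sum_univ_succ]
    rw [List.ofFn_succ, List.prod_cons, Module.End.mul_apply, hhead,
      apply_prod_ofFn_of_anticomm hx _ (fun i => c i.succ) (fun j => hθ j.succ),
      map_sum, sub_eq_add_neg, ← Finset.sum_neg_distrib]
    simp only [Fin.val_zero, pow_zero, one_mul, Fin.removeNth_zero, Fin.val_succ, pow_succ,
      hremove, map_smul]
    congr 1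
    refine Finset.sum_congr rfl fun j _ => ?_
    rw [← neg_smul]
    ring_nf

theorem prod_ofFn_apply_prod_ofFn_eq_det_smul {u : S} :
    ∀ {k : ℕ} (x θ : Fin k → Module.End R S) (g : Matrix (Fin k) (Fin k) R),
      (∀ a, x a u = 0) → (∀ a b, x a * θ b + θ b * x a = g a b • 1) →
      (List.ofFn x).prod ((List.ofFn θ).prod u) = ((-1) ^ k.choose 2 * g.det) • u
  | 0, _, _, _, _, _ => by simp
  | k + 1, x, θ, g, hx, hg => by
    have hchoose : (k + 1).choose 2 = k.choose 2 + k := by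
      rw [Nat.choose_succ_succ', Nat.choose_one_right, add_comm]
    rw [List.ofFn_succ', List.prod_concat, Module.End.mul_apply,
      apply_prod_ofFn_of_anticomm (hx _) θ _ (hg (Fin.last k)), map_sum]
    have hminor (j : Fin (k + 1)) :
        (List.ofFn fun i => x i.castSucc).prod ((List.ofFn (Fin.removeNth j θ)).prod u) =
          ((-1) ^ k.choose 2 * (g.submatrix Fin.castSucc j.succAbove).det) • u :=
      prod_ofFn_apply_prod_ofFn_eq_det_smul _ _ _ (fun _ => hx _) (fun _ _ => hg _ _)
    simp only [map_smul, hminor, smul_smul, ← Finset.sum_smul]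
    congr 1
    rw [Matrix.det_succ_row g (Fin.last k), Finset.mul_sum, hchoose, pow_add]
    refine Finset.sum_congr rfl fun j _ => ?_
    have hkk : (-1 : R) ^ (k + k) = 1 := Even.neg_one_pow ⟨k, rfl⟩
    rw [Fin.val_last, pow_add, Fin.succAbove_last]
    linear_combination (-((-1 : R) ^ k.choose 2 * (-1) ^ (j : ℕ) * g (Fin.last k) j *
      (g.submatrix Fin.castSucc j.succAbove).det)) * hkk

end CliffordDeterminant

section Spinors

variable {T}

theorem clAct_anticomm (z w : Ec T) :
    clAct T z * clAct T w + clAct T w * clAct T z = (2 * pairEc T z w) • 1 := by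
  refine LinearMap.ext fun s => ?_
  simp only [clAct, LinearMap.add_apply, Module.End.mul_apply, LinearMap.smul_apply,
    Module.End.one_apply, LinearMap.mulLeft_apply, map_add]
  rw [CliffordAlgebra.contractLeft_ι_mul, CliffordAlgebra.contractLeft_ι_mul,
    CliffordAlgebra.contractLeft_comm]
  have hιι : ExteriorAlgebra.ι ℂ z.2 * (ExteriorAlgebra.ι ℂ w.2 * s)
      + ExteriorAlgebra.ι ℂ w.2 * (ExteriorAlgebra.ι ℂ z.2 * s) = 0 := by
    rw [← mul_assoc, ← mul_assoc, ← add_mul, ExteriorAlgebra.ι_add_mul_swap, zero_mul]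
  have hpair : 2 * pairEc T z w = w.2 z.1 + z.2 w.1 := by
    rw [pairEc]; ring
  simp only [hpair, Module.Dual.eval_apply, add_smul]
  linear_combination (norm := abel) hιι

theorem clAct_eq_zero_of_mem_pureSpinorLine {L : Submodule ℂ (Ec T)} {u : Sp T}
    (hu : u ∈ pureSpinorLine T L) {z : Ec T} (hz : z ∈ L) : clAct T z u = 0 := by
  simp only [pureSpinorLine, Submodule.mem_iInf, LinearMap.mem_ker] at hu
  exact hu z hz

theorem sigmaT_sigmaT {σT : Tc T →+ Tc T}
    (hσT : ∀ (c : ℂ) (t : T), σT (c ⊗ₜ[ℝ] t) = (starRingEnd ℂ c) ⊗ₜ[ℝ] t)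
    (v : Tc T) : σT (σT v) = v := by
  induction v using TensorProduct.induction_on with
  | zero => simp
  | tmul c t => rw [hσT, hσT, Complex.conj_conj]
  | add a b ha hb => rw [map_add, map_add, ha, hb]

theorem sigmaTs_sigmaTs {σT : Tc T →+ Tc T} {σTs : Tsc T → Tsc T}
    (hσT : ∀ (c : ℂ) (t : T), σT (c ⊗ₜ[ℝ] t) = (starRingEnd ℂ c) ⊗ₜ[ℝ] t)
    (hσTs : ∀ (η : Tsc T) (v : Tc T), σTs η v = starRingEnd ℂ (η (σT v)))
    (η : Tsc T) : σTs (σTs η) = η :=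
  LinearMap.ext fun v => by rw [hσTs, hσTs, Complex.conj_conj, sigmaT_sigmaT hσT]

theorem sigmaS_algebraMap {σS : Sp T →+ Sp T} (hσS1 : σS 1 = 1)
    (hσSsmul : ∀ (c : ℂ) (s : Sp T), σS (c • s) = (starRingEnd ℂ c) • σS s) (r : ℂ) :
    σS (algebraMap ℂ (Sp T) r) = algebraMap ℂ (Sp T) (starRingEnd ℂ r) := by
  rw [Algebra.algebraMap_eq_smul_one, hσSsmul, hσS1, Algebra.algebraMap_eq_smul_one]

structure IsSpinorConjugation (σT : Tc T →+ Tc T) (σTs : Tsc T → Tsc T) (σS : Sp T →+ Sp T) :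
    Prop where
  tmul : ∀ (c : ℂ) (t : T), σT (c ⊗ₜ[ℝ] t) = (starRingEnd ℂ c) ⊗ₜ[ℝ] t
  dual_apply : ∀ (η : Tsc T) (v : Tc T), σTs η v = starRingEnd ℂ (η (σT v))
  map_one : σS 1 = 1
  map_mul : ∀ a b : Sp T, σS (a * b) = σS a * σS b
  map_smul : ∀ (c : ℂ) (s : Sp T), σS (c • s) = (starRingEnd ℂ c) • σS s
  map_ι : ∀ η : Tsc T, σS (ExteriorAlgebra.ι ℂ η) = ExteriorAlgebra.ι ℂ (σTs η)

namespace IsSpinorConjugation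

variable {σT : Tc T →+ Tc T} {σTs : Tsc T → Tsc T} {σS : Sp T →+ Sp T}

theorem map_contractLeft (h : IsSpinorConjugation σT σTs σS) (x : Tc T) (s : Sp T) :
    σS (CliffordAlgebra.contractLeft (Module.Dual.eval ℂ (Tc T) x) s) =
      CliffordAlgebra.contractLeft (Module.Dual.eval ℂ (Tc T) (σT x)) (σS s) := by
  induction s using CliffordAlgebra.left_induction with
  | algebraMap r =>
    rw [CliffordAlgebra.contractLeft_algebraMap, map_zero,
      sigmaS_algebraMap h.map_one h.map_smul, CliffordAlgebra.contractLeft_algebraMap]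
  | add a b ha hb => rw [map_add, map_add, ha, hb, map_add, map_add]
  | ι_mul s η ih =>
    have hηx : σTs η (σT x) = starRingEnd ℂ (η x) := by
      rw [h.dual_apply, sigmaT_sigmaT h.tmul]
    rw [CliffordAlgebra.contractLeft_ι_mul, AddMonoidHom.map_sub, h.map_smul, h.map_mul,
      h.map_ι, ih]
    rw [h.map_mul, h.map_ι, CliffordAlgebra.contractLeft_ι_mul]
    simp only [Module.Dual.eval_apply, hηx]

theorem map_clAct (h : IsSpinorConjugation σT σTs σS) (z : Ec T) (s : Sp T) :
    σS (clAct T z s) = clAct T (conjEc T σT σTs z) (σS s) := by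
  simp only [clAct, LinearMap.add_apply, LinearMap.mulLeft_apply, conjEc, map_add,
    h.map_contractLeft, h.map_mul, h.map_ι]

theorem map_prod_ofFn_clAct (h : IsSpinorConjugation σT σTs σS) :
    ∀ {k : ℕ} (Z : Fin k → Ec T) (s : Sp T),
      σS ((List.ofFn fun a => clAct T (Z a)).prod s) =
        (List.ofFn fun a => clAct T (conjEc T σT σTs (Z a))).prod (σS s)
  | 0, _, _ => by simp
  | k + 1, Z, s => by
    simp only [List.ofFn_succ, List.prod_cons, Module.End.mul_apply, h.map_clAct,
      h.map_prod_ofFn_clAct (fun i => Z i.succ)]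

theorem sigmaS_sigmaS (h : IsSpinorConjugation σT σTs σS) (s : Sp T) : σS (σS s) = s := by
  induction s using CliffordAlgebra.induction with
  | algebraMap r =>
    rw [sigmaS_algebraMap h.map_one h.map_smul, sigmaS_algebraMap h.map_one h.map_smul,
      Complex.conj_conj]
  | ι η => rw [h.map_ι, h.map_ι, sigmaTs_sigmaTs h.tmul h.dual_apply]
  | mul a b ha hb => rw [h.map_mul, h.map_mul, ha, hb]
  | add a b ha hb => rw [map_add, map_add, ha, hb]

end IsSpinorConjugation

end Spinors

theorem conj_top_product_and_duality {n : ℕ}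
    (Jc : Module.End ℂ (Ec T))
    (σT : Tc T →+ Tc T)
    (hσT : ∀ (c : ℂ) (t : T), σT (c ⊗ₜ[ℝ] t) = (starRingEnd ℂ c) ⊗ₜ[ℝ] t)
    (σTs : Tsc T → Tsc T)
    (hσTs : ∀ (η : Tsc T) (v : Tc T), σTs η v = starRingEnd ℂ (η (σT v)))
    (σS : Sp T →+ Sp T)
    (hσS1 : σS 1 = 1)
    (hσSmul : ∀ a b : Sp T, σS (a * b) = σS a * σS b)
    (hσSsmul : ∀ (c : ℂ) (s : Sp T), σS (c • s) = (starRingEnd ℂ c) • σS s)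
    (hσSι : ∀ η : Tsc T, σS (ExteriorAlgebra.ι ℂ η) = ExteriorAlgebra.ι ℂ (σTs η))
    (u : Sp T) (hu : u ∈ pureSpinorLine T (eigSp T Jc Complex.I)) (hune : u ≠ 0)
    (X : Fin (2 * n) → Ec T) (hX : ∀ a, X a ∈ eigSp T Jc Complex.I)
    -- `𝒱 = X 0 ∧ ⋯ ∧ X (2n-1)` satisfies `𝒱 · ū = u`
    (hV : ((List.ofFn fun a => clAct T (X a)).prod) (σS u) = u) :
    -- `𝒱̄ · u = ū`
    ((List.ofFn fun a => clAct T (conjEc T σT σTs (X a))).prod) u = σS u ∧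
    -- `⟨𝒱, 𝒱̄⟩ = (−1)^n`
    Matrix.det (Matrix.of fun a b : Fin (2 * n) =>
        2 * pairEc T (X a) (conjEc T σT σTs (X b))) = (-1 : ℂ) ^ n ∧
    -- `⟨𝒱, Ω⟩ = 1` for `Ω = (−1)^n 𝒱̄`
    (-1 : ℂ) ^ n * Matrix.det (Matrix.of fun a b : Fin (2 * n) =>
        2 * pairEc T (X a) (conjEc T σT σTs (X b))) = 1 := by
  have hconj : IsSpinorConjugation σT σTs σS := ⟨hσT, hσTs, hσS1, hσSmul, hσSsmul, hσSι⟩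
  have hbar : (List.ofFn fun a => clAct T (conjEc T σT σTs (X a))).prod u = σS u := by
    simpa only [hconj.map_prod_ofFn_clAct, hconj.sigmaS_sigmaS] using congrArg σS hV
  have hdet := prod_ofFn_apply_prod_ofFn_eq_det_smul (fun a => clAct T (X a))
    (fun b => clAct T (conjEc T σT σTs (X b)))
    (Matrix.of fun a b => 2 * pairEc T (X a) (conjEc T σT σTs (X b)))
    (fun a => clAct_eq_zero_of_mem_pureSpinorLine hu (hX a))
    (fun a b => clAct_anticomm (X a) (conjEc T σT σTs (X b)))
  rw [hbar, hV, neg_one_pow_choose_two_two_mul] at hdet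
  have hdual : (-1 : ℂ) ^ n * Matrix.det (Matrix.of fun a b : Fin (2 * n) =>
      2 * pairEc T (X a) (conjEc T σT σTs (X b))) = 1 :=
    smul_left_injective ℂ hune (by simpa only [one_smul] using hdet.symm)
  exact ⟨hbar, by rw [eq_inv_of_mul_eq_one_right hdual, ← inv_pow, inv_neg_one], hdual⟩
end
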